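/- Let τ₀ = |0⟩⟨0| and τ₊ = |+⟩⟨+| be the 2×2 rank-one projections onto the unit vectors (1,0) and (1/√2)(1,1) of ℂ². Let ω₀ and ω₊ be density matrices on ℂ²⊗ℂ² (4×4 matrices indexed by Fin 2 × Fin 2) such that (1/2)‖ω₀ − τ₀⊗τ₀‖₁ ≤ c, (1/2)‖ω₊ − τ₊⊗τ₊‖₁ ≤ c, and (1/2)‖ω₊ − ω₀‖₁ ≤ (1/2)‖τ₊ − τ₀‖₁. Then √(3/4) − √(1/2) ≤ 2c; in particular c ≥ (√3 − √2)/4. -/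

import Mathlib

open Matrix ComplexOrder

open scoped MatrixOrder Matrix.Norms.L2Operator in
noncomputable def traceNorm {n : Type*} [Fintype n] [DecidableEq n]
    (A : Matrix n n ℂ) : ℝ :=
  ((CFC.sqrt (Aᴴ * A)).trace).re

noncomputable def ketbra {d : ℕ} (ψ : Fin d → ℂ) : Matrix (Fin d) (Fin d) ℂ :=
  fun i j => ψ i * (starRingEnd ℂ) (ψ j)

noncomputable def kronPow {d : ℕ} (M : Matrix (Fin d) (Fin d) ℂ) (k : ℕ) :
    Matrix (Fin k → Fin d) (Fin k → Fin d) ℂ :=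
  fun i j => ∏ t : Fin k, M (i t) (j t)

noncomputable def fid {d : ℕ} (ψ : Fin d → ℂ) (σ : Matrix (Fin d) (Fin d) ℂ) : ℝ :=
  (∑ i, ∑ j, (starRingEnd ℂ) (ψ i) * σ i j * ψ j).re

/-!
The trace norm is dual to the operator norm on Hermitian matrices: `Re tr (M X) ≤ ‖X‖₁` for
every contraction `M`, with equality at `M = sign X`, so it satisfies the triangle inequality.
For unit vectors `u, v` with overlap `p = |⟨u, v⟩|²`, the difference `D = uu* - vv*` of the two
rank-one projections satisfies `D³ = (1 - p) D`, so `D² / √(1 - p)` is the positive square root of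
`D²` and `‖D‖₁ = tr D² / √(1 - p) = 2 √(1 - p)`. The overlap of `|+⟩, |0⟩` is `1/2` and that of
`|++⟩, |00⟩` is `1/4`, so the triangle inequality
`‖τ₊⊗τ₊ - τ₀⊗τ₀‖₁ ≤ ‖ω₊ - τ₊⊗τ₊‖₁ + ‖ω₊ - ω₀‖₁ + ‖ω₀ - τ₀⊗τ₀‖₁` reads `2√(3/4) ≤ 4c + 2√(1/2)`.
-/

open scoped MatrixOrder Kronecker

section TraceNorm

variable {n : Type*} [Fintype n] [DecidableEq n]

theorem traceNorm_eq_re_trace_abs (A : Matrix n n ℂ) :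
    traceNorm A = (CFC.abs A).trace.re := rfl

theorem Matrix.IsHermitian.trace_cfc {X : Matrix n n ℂ} (hX : X.IsHermitian) (f : ℝ → ℝ) :
    (cfc f X).trace = ∑ i, (f (hX.eigenvalues i) : ℂ) := by
  rw [hX.cfc_eq, IsHermitian.cfc, Unitary.conjStarAlgAut_apply, trace_mul_cycle]
  simp [trace_diagonal]

theorem Matrix.IsHermitian.traceNorm_eq_sum_abs_eigenvalues {X : Matrix n n ℂ}
    (hX : X.IsHermitian) : traceNorm X = ∑ i, |hX.eigenvalues i| := by
  rw [traceNorm_eq_re_trace_abs, CFC.abs_eq_cfc_norm X hX.isSelfAdjoint, hX.trace_cfc]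
  simp [Complex.re_sum]

theorem Matrix.norm_apply_self_le_one_of_star_mul_self_le_one {N : Matrix n n ℂ}
    (hN : star N * N ≤ 1) (i : n) : ‖N i i‖ ≤ 1 := by
  have hdiag : (star N * N) i i = ((∑ k, ‖N k i‖ ^ 2 : ℝ) : ℂ) := by
    simp [mul_apply, Complex.conj_mul']
  have hsum : ∑ k, ‖N k i‖ ^ 2 ≤ 1 := by
    have := (le_iff.mp hN).diag_nonneg (i := i)
    rw [sub_apply, one_apply_eq, hdiag, sub_nonneg] at this
    exact_mod_cast this
  have hsingle : ‖N i i‖ ^ 2 ≤ ∑ k, ‖N k i‖ ^ 2 :=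
    Finset.single_le_sum (fun k _ => sq_nonneg ‖N k i‖) (Finset.mem_univ i)
  exact (sq_le_one_iff₀ (norm_nonneg _)).mp (hsingle.trans hsum)

theorem Matrix.IsHermitian.re_trace_mul_le_traceNorm {M X : Matrix n n ℂ} (hX : X.IsHermitian)
    (hM : star M * M ≤ 1) : (M * X).trace.re ≤ traceNorm X := by
  set U : Matrix n n ℂ := (hX.eigenvectorUnitary : Matrix n n ℂ)
  have hUU : star U * U = 1 := Unitary.coe_star_mul_self _
  have hUU' : U * star U = 1 := Unitary.coe_mul_star_self _
  set N := star U * M * U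
  have hN : star N * N ≤ 1 := by
    calc star N * N = star U * (star M * M) * U := by
          simp only [N, star_mul, star_star, mul_assoc, ← mul_assoc U (star U), hUU', one_mul]
      _ ≤ star U * 1 * U := star_left_conjugate_le_conjugate hM U
      _ = 1 := by rw [mul_one, hUU]
  have htrace : (M * X).trace = ∑ i, N i i * hX.eigenvalues i := by
    conv_lhs => rw [hX.spectral_theorem, Unitary.conjStarAlgAut_apply]
    rw [← mul_assoc, ← mul_assoc, trace_mul_cycle, ← mul_assoc]
    simp only [trace, Complex.coe_algebraMap, diag_apply, mul_diagonal, Function.comp_apply]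
    rfl
  rw [hX.traceNorm_eq_sum_abs_eigenvalues, htrace, Complex.re_sum]
  gcongr with i
  calc (N i i * hX.eigenvalues i).re = (N i i).re * hX.eigenvalues i := by simp
    _ ≤ |(N i i).re * hX.eigenvalues i| := le_abs_self _
    _ ≤ |hX.eigenvalues i| := by
      rw [abs_mul]
      exact mul_le_of_le_one_left (abs_nonneg _)
        ((Complex.abs_re_le_norm _).trans (norm_apply_self_le_one_of_star_mul_self_le_one hN i))

theorem Matrix.IsHermitian.exists_re_trace_mul_eq_traceNorm {X : Matrix n n ℂ}
    (hX : X.IsHermitian) :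
    ∃ M : Matrix n n ℂ, star M * M ≤ 1 ∧ (M * X).trace.re = traceNorm X := by
  have hsign : ContinuousOn (fun x : ℝ => (SignType.sign x : ℝ)) (spectrum ℝ X) :=
    X.finite_real_spectrum.continuousOn _
  refine ⟨cfc (fun x : ℝ => (SignType.sign x : ℝ)) X, ?_, ?_⟩
  · rw [← cfc_star, ← cfc_mul _ _ _ (by simpa using hsign) hsign]
    refine cfc_le_one _ _ fun x _ => ?_
    rcases lt_trichotomy x 0 with hx | rfl | hx <;> simp [*]
  · rw [traceNorm_eq_re_trace_abs, CFC.abs_eq_cfc_norm X hX.isSelfAdjoint]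
    conv_lhs => enter [1, 1, 2]; rw [← cfc_id' ℝ X]
    rw [← cfc_mul _ _ _ hsign]
    simp only [sign_mul_self, Real.norm_eq_abs]

theorem Matrix.IsHermitian.traceNorm_add_le {X Y : Matrix n n ℂ} (hX : X.IsHermitian)
    (hY : Y.IsHermitian) : traceNorm (X + Y) ≤ traceNorm X + traceNorm Y := by
  obtain ⟨M, hM, hMXY⟩ := (hX.add hY).exists_re_trace_mul_eq_traceNorm
  calc traceNorm (X + Y) = (M * X).trace.re + (M * Y).trace.re := by
        rw [← hMXY, mul_add, trace_add, Complex.add_re]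
    _ ≤ traceNorm X + traceNorm Y :=
        add_le_add (hX.re_trace_mul_le_traceNorm hM) (hY.re_trace_mul_le_traceNorm hM)

theorem traceNorm_neg (X : Matrix n n ℂ) : traceNorm (-X) = traceNorm X := by
  simp [traceNorm_eq_re_trace_abs]

theorem Matrix.IsHermitian.traceNorm_sub_le {X Y Z : Matrix n n ℂ} (hX : X.IsHermitian)
    (hY : Y.IsHermitian) (hZ : Z.IsHermitian) :
    traceNorm (X - Z) ≤ traceNorm (X - Y) + traceNorm (Y - Z) := by
  simpa using (hX.sub hY).traceNorm_add_le (hY.sub hZ)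

theorem traceNorm_sub_comm (X Y : Matrix n n ℂ) : traceNorm (X - Y) = traceNorm (Y - X) := by
  rw [← neg_sub, traceNorm_neg]

theorem Matrix.IsHermitian.traceNorm_sub_le_add_add {A X Y B : Matrix n n ℂ}
    (hA : A.IsHermitian) (hX : X.IsHermitian) (hY : Y.IsHermitian) (hB : B.IsHermitian) :
    traceNorm (A - B) ≤ traceNorm (X - A) + traceNorm (X - Y) + traceNorm (Y - B) := by
  calc traceNorm (A - B) ≤ traceNorm (A - X) + traceNorm (X - B) := hA.traceNorm_sub_le hX hB
    _ ≤ traceNorm (X - A) + (traceNorm (X - Y) + traceNorm (Y - B)) := by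
        rw [traceNorm_sub_comm]
        gcongr
        exact hX.traceNorm_sub_le hY hB
    _ = _ := (add_assoc _ _ _).symm

theorem sub_pow_three_of_isIdempotentElem {𝕜 R : Type*} [CommRing 𝕜] [Ring R] [Algebra 𝕜 R]
    {P Q : R} {p : 𝕜} (hP : IsIdempotentElem P) (hQ : IsIdempotentElem Q)
    (hPQP : P * Q * P = p • P) (hQPQ : Q * P * Q = p • Q) :
    (P - Q) ^ 3 = (1 - p) • (P - Q) := by
  have hP' : ∀ x, P * (P * x) = P * x := fun x => by rw [← mul_assoc, hP.eq]
  have hQ' : ∀ x, Q * (Q * x) = Q * x := fun x => by rw [← mul_assoc, hQ.eq]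
  calc (P - Q) ^ 3 = P * (P * P) - P * (P * Q) - P * (Q * P) + P * (Q * Q) - Q * (P * P)
        + Q * (P * Q) + Q * (Q * P) - Q * (Q * Q) := by noncomm_ring
    _ = P - P * Q * P + Q * P * Q - Q := by
        simp only [hP.eq, hQ.eq, hP', hQ', mul_assoc]; abel
    _ = (1 - p) • (P - Q) := by rw [hPQP, hQPQ]; module

theorem Matrix.IsHermitian.traceNorm_eq_of_pow_three {D : Matrix n n ℂ} (hD : D.IsHermitian)
    {s : ℝ} (hs : 0 < s) (h : D ^ 3 = (s : ℂ) • D) :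
    traceNorm D = (D ^ 2).trace.re / √s := by
  set B : Matrix n n ℂ := (√s)⁻¹ • D ^ 2
  have hB : 0 ≤ B := by
    refine smul_nonneg (by positivity) ?_
    have := star_mul_self_nonneg D
    rwa [star_eq_conjTranspose, hD.eq, ← sq] at this
  have hBB : B * B = star D * D := by
    have hs' : (s : ℂ) ≠ 0 := by exact_mod_cast hs.ne'
    rw [star_eq_conjTranspose, hD.eq, smul_mul_smul_comm, ← pow_add, pow_succ, h,
      smul_mul_assoc, ← smul_assoc, ← mul_inv, Real.mul_self_sqrt hs.le, Complex.real_smul,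
      Complex.ofReal_inv, inv_mul_cancel₀ hs', one_smul]
  rw [traceNorm_eq_re_trace_abs, CFC.abs, CFC.sqrt_unique hBB hB, trace_smul]
  rw [Complex.smul_re, smul_eq_mul, inv_mul_eq_div]

theorem isHermitian_vecMulVec_star {ι : Type*} (w : ι → ℂ) :
    (vecMulVec w (star w)).IsHermitian := by
  simp [IsHermitian]

theorem traceNorm_vecMulVec_sub_vecMulVec {u v : n → ℂ} (hu : star u ⬝ᵥ u = 1)
    (hv : star v ⬝ᵥ v = 1) (huv : ‖star u ⬝ᵥ v‖ < 1) :
    traceNorm (vecMulVec u (star u) - vecMulVec v (star v)) =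
      2 * √(1 - ‖star u ⬝ᵥ v‖ ^ 2) := by
  set P := vecMulVec u (star u)
  set Q := vecMulVec v (star v)
  set p := ‖star u ⬝ᵥ v‖ ^ 2
  have hvu : star v ⬝ᵥ u = star (star u ⬝ᵥ v) := star_dotProduct _ _
  have hoverlap : (star u ⬝ᵥ v) * (star v ⬝ᵥ u) = (p : ℂ) := by
    rw [hvu, Complex.star_def, Complex.mul_conj', Complex.ofReal_pow]
  have hPQ : P * Q = (star u ⬝ᵥ v) • vecMulVec u (star v) := by
    rw [vecMulVec_mul_vecMulVec, vecMulVec_smul]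
  have hP : IsIdempotentElem P := by
    rw [IsIdempotentElem, vecMulVec_mul_vecMulVec, hu, one_smul]
  have hQ : IsIdempotentElem Q := by
    rw [IsIdempotentElem, vecMulVec_mul_vecMulVec, hv, one_smul]
  have hPQP : P * Q * P = (p : ℂ) • P := by
    rw [hPQ, smul_mul_assoc, vecMulVec_mul_vecMulVec, vecMulVec_smul, smul_smul, hoverlap]
  have hQPQ : Q * P * Q = (p : ℂ) • Q := by
    rw [vecMulVec_mul_vecMulVec, vecMulVec_smul, smul_mul_assoc, vecMulVec_mul_vecMulVec,
      vecMulVec_smul, smul_smul, mul_comm, hoverlap]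
  have hD : (P - Q).IsHermitian :=
    (isHermitian_vecMulVec_star u).sub (isHermitian_vecMulVec_star v)
  have hcube : (P - Q) ^ 3 = ((1 - p : ℝ) : ℂ) • (P - Q) := by
    push_cast; exact sub_pow_three_of_isIdempotentElem hP hQ hPQP hQPQ
  have htrace : ((P - Q) ^ 2).trace.re = 2 * (1 - p) := by
    have htrP : P.trace = 1 := by rw [trace_vecMulVec, dotProduct_comm, hu]
    have htrQ : Q.trace = 1 := by rw [trace_vecMulVec, dotProduct_comm, hv]
    have htrPQ : (P * Q).trace = p := by
      rw [hPQ, trace_smul, trace_vecMulVec, dotProduct_comm u, smul_eq_mul, hoverlap]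
    have hsq : (P - Q) ^ 2 = P * P - P * Q - Q * P + Q * Q := by noncomm_ring
    rw [hsq, hP.eq, hQ.eq, trace_add, trace_sub, trace_sub, trace_mul_comm Q, htrP, htrQ,
      htrPQ]
    simp only [Complex.add_re, Complex.sub_re, Complex.one_re, Complex.ofReal_re]
    ring
  have hp : 0 < 1 - p := by
    simp only [p, sub_pos]; nlinarith [norm_nonneg (star u ⬝ᵥ v)]
  rw [hD.traceNorm_eq_of_pow_three hp hcube, htrace]
  rw [div_eq_iff (Real.sqrt_pos.mpr hp).ne', mul_assoc, Real.mul_self_sqrt hp.le]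

end TraceNorm

theorem ketbra_eq_vecMulVec {d : ℕ} (ψ : Fin d → ℂ) : ketbra ψ = vecMulVec ψ (star ψ) := rfl

theorem vecMulVec_kronecker_vecMulVec {α l m : Type*} [CommSemiring α] (a b : l → α)
    (c d : m → α) :
    vecMulVec a b ⊗ₖ vecMulVec c d =
      vecMulVec (fun i => a i.1 * c i.2) (fun j => b j.1 * d j.2) := by
  ext i j
  simp only [kroneckerMap_apply, vecMulVec_apply]
  ring

theorem star_dotProduct_prod {l m : Type*} [Fintype l] [Fintype m] (u u' : l → ℂ)
    (v v' : m → ℂ) :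
    star (fun i : l × m => u i.1 * v i.2) ⬝ᵥ (fun i => u' i.1 * v' i.2) =
      (star u ⬝ᵥ u') * (star v ⬝ᵥ v') := by
  simp only [dotProduct, Fintype.sum_prod_type, Finset.sum_mul_sum, Pi.star_apply, star_mul']
  exact Fintype.sum_congr _ _ fun x => Fintype.sum_congr _ _ fun y => by ring

theorem ketbra_kronecker_ketbra {d : ℕ} (u v : Fin d → ℂ) :
    ketbra u ⊗ₖ ketbra v =
      vecMulVec (fun i => u i.1 * v i.2) (star fun i => u i.1 * v i.2) := by
  rw [ketbra_eq_vecMulVec, ketbra_eq_vecMulVec, vecMulVec_kronecker_vecMulVec]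
  congr 1
  ext i
  simp

theorem traceNorm_ketbra_kronecker_self_sub {d : ℕ} {u v : Fin d → ℂ}
    (hu : star u ⬝ᵥ u = 1) (hv : star v ⬝ᵥ v = 1) (huv : ‖star u ⬝ᵥ v‖ < 1) :
    traceNorm (ketbra u ⊗ₖ ketbra u - ketbra v ⊗ₖ ketbra v) =
      2 * √(1 - ‖star u ⬝ᵥ v‖ ^ 4) := by
  have hsq : ‖star u ⬝ᵥ v‖ ^ 2 < 1 := pow_lt_one₀ (norm_nonneg _) huv two_ne_zero
  rw [ketbra_kronecker_ketbra, ketbra_kronecker_ketbra, traceNorm_vecMulVec_sub_vecMulVec]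
  · rw [star_dotProduct_prod, norm_mul, ← sq, ← pow_mul]
  · rw [star_dotProduct_prod, hu, one_mul]
  · rw [star_dotProduct_prod, hv, one_mul]
  · rwa [star_dotProduct_prod, norm_mul, ← sq]

def ketZero : Fin 2 → ℂ := ![1, 0]

noncomputable def ketPlus : Fin 2 → ℂ := ![((Real.sqrt 2 : ℝ) : ℂ)⁻¹, ((Real.sqrt 2 : ℝ) : ℂ)⁻¹]

theorem star_ketZero_dotProduct_self : star ketZero ⬝ᵥ ketZero = 1 := by
  simp [ketZero, dotProduct]

theorem star_ketPlus_dotProduct_self : star ketPlus ⬝ᵥ ketPlus = 1 := by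
  have hhalf : ((√2 : ℝ) : ℂ)⁻¹ * ((√2 : ℝ) : ℂ)⁻¹ = 1 / 2 := by
    rw [← mul_inv, ← Complex.ofReal_mul, Real.mul_self_sqrt zero_le_two]
    norm_num
  simp only [dotProduct, ketPlus, Pi.star_apply, RCLike.star_def, Fin.sum_univ_two, cons_val_zero,
    cons_val_one, cons_val_fin_one, map_inv₀, Complex.conj_ofReal, hhalf]
  norm_num

theorem norm_star_ketPlus_dotProduct_ketZero_sq : ‖star ketPlus ⬝ᵥ ketZero‖ ^ 2 = 1 / 2 := by
  simp [ketPlus, ketZero, dotProduct]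

theorem isHermitian_ketbra_kronecker_ketbra {d : ℕ} (u v : Fin d → ℂ) :
    (ketbra u ⊗ₖ ketbra v).IsHermitian := by
  rw [ketbra_kronecker_ketbra]
  exact isHermitian_vecMulVec_star _

theorem norm_star_ketPlus_dotProduct_ketZero_lt_one : ‖star ketPlus ⬝ᵥ ketZero‖ < 1 := by
  nlinarith [norm_star_ketPlus_dotProduct_ketZero_sq, norm_nonneg (star ketPlus ⬝ᵥ ketZero)]

theorem traceNorm_ketbra_ketPlus_sub_ketZero :
    traceNorm (ketbra ketPlus - ketbra ketZero) = 2 * √(1 / 2) := by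
  rw [ketbra_eq_vecMulVec, ketbra_eq_vecMulVec, traceNorm_vecMulVec_sub_vecMulVec
    star_ketPlus_dotProduct_self star_ketZero_dotProduct_self
    norm_star_ketPlus_dotProduct_ketZero_lt_one, norm_star_ketPlus_dotProduct_ketZero_sq]
  norm_num

theorem traceNorm_ketbra_ketPlus_kronecker_sub_ketZero :
    traceNorm (ketbra ketPlus ⊗ₖ ketbra ketPlus - ketbra ketZero ⊗ₖ ketbra ketZero) =
      2 * √(3 / 4) := by
  rw [traceNorm_ketbra_kronecker_self_sub star_ketPlus_dotProduct_self
    star_ketZero_dotProduct_self norm_star_ketPlus_dotProduct_ketZero_lt_one,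
    show ‖star ketPlus ⬝ᵥ ketZero‖ ^ 4 = (‖star ketPlus ⬝ᵥ ketZero‖ ^ 2) ^ 2 by ring,
    norm_star_ketPlus_dotProduct_ketZero_sq]
  norm_num

open Kronecker in
theorem bb84_cloning_error_lower_bound_general (c : ℝ)
    (ω₀ ωp : Matrix (Fin 2 × Fin 2) (Fin 2 × Fin 2) ℂ)
    (hω₀ : ω₀.PosSemidef)
    (hωp : ωp.PosSemidef)
    (h0 : (1 / 2 : ℝ) * traceNorm
        (ω₀ - (ketbra ![1, 0]) ⊗ₖ (ketbra ![1, 0])) ≤ c)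
    (hplus : (1 / 2 : ℝ) * traceNorm
        (ωp - (ketbra ![((Real.sqrt 2 : ℝ) : ℂ)⁻¹, ((Real.sqrt 2 : ℝ) : ℂ)⁻¹])
            ⊗ₖ (ketbra ![((Real.sqrt 2 : ℝ) : ℂ)⁻¹, ((Real.sqrt 2 : ℝ) : ℂ)⁻¹])) ≤ c)
    (hcontr : (1 / 2 : ℝ) * traceNorm (ωp - ω₀)
        ≤ (1 / 2 : ℝ) * traceNorm
            (ketbra ![((Real.sqrt 2 : ℝ) : ℂ)⁻¹, ((Real.sqrt 2 : ℝ) : ℂ)⁻¹]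
              - ketbra ![1, 0])) :
    Real.sqrt (3 / 4) - Real.sqrt (1 / 2) ≤ 2 * c ∧
      (Real.sqrt 3 - Real.sqrt 2) / 4 ≤ c := by
  change _ * traceNorm (ω₀ - ketbra ketZero ⊗ₖ ketbra ketZero) ≤ c at h0
  change _ * traceNorm (ωp - ketbra ketPlus ⊗ₖ ketbra ketPlus) ≤ c at hplus
  change _ ≤ _ * traceNorm (ketbra ketPlus - ketbra ketZero) at hcontr
  have htri := (isHermitian_ketbra_kronecker_ketbra ketPlus ketPlus).traceNorm_sub_le_add_add
    hωp.1 hω₀.1 (isHermitian_ketbra_kronecker_ketbra ketZero ketZero)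
  rw [traceNorm_ketbra_ketPlus_kronecker_sub_ketZero] at htri
  rw [traceNorm_ketbra_ketPlus_sub_ketZero] at hcontr
  have h34 : √(3 / 4) = √3 / 2 := by
    rw [Real.sqrt_eq_iff_mul_self_eq_of_pos (by positivity), div_mul_div_comm,
      Real.mul_self_sqrt (by norm_num)]
    norm_num
  have h12 : √(1 / 2) = √2 / 2 := by
    rw [Real.sqrt_eq_iff_mul_self_eq_of_pos (by positivity), div_mul_div_comm,
      Real.mul_self_sqrt (by norm_num)]
    norm_num
  constructor <;> linarith

open Kronecker in
/-- The introduction's computation: the errors of a cloner of BB84 states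
cannot be too small. -/
theorem bb84_cloning_error_lower_bound (c : ℝ)
    (ω₀ ωp : Matrix (Fin 2 × Fin 2) (Fin 2 × Fin 2) ℂ)
    (hω₀ : ω₀.PosSemidef) (hω₀tr : ω₀.trace = 1)
    (hωp : ωp.PosSemidef) (hωptr : ωp.trace = 1)
    (h0 : (1 / 2 : ℝ) * traceNorm
        (ω₀ - (ketbra ![1, 0]) ⊗ₖ (ketbra ![1, 0])) ≤ c)
    (hplus : (1 / 2 : ℝ) * traceNorm
        (ωp - (ketbra ![((Real.sqrt 2 : ℝ) : ℂ)⁻¹, ((Real.sqrt 2 : ℝ) : ℂ)⁻¹])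
            ⊗ₖ (ketbra ![((Real.sqrt 2 : ℝ) : ℂ)⁻¹, ((Real.sqrt 2 : ℝ) : ℂ)⁻¹])) ≤ c)
    (hcontr : (1 / 2 : ℝ) * traceNorm (ωp - ω₀)
        ≤ (1 / 2 : ℝ) * traceNorm
            (ketbra ![((Real.sqrt 2 : ℝ) : ℂ)⁻¹, ((Real.sqrt 2 : ℝ) : ℂ)⁻¹]
              - ketbra ![1, 0])) :
    Real.sqrt (3 / 4) - Real.sqrt (1 / 2) ≤ 2 * c ∧
      (Real.sqrt 3 - Real.sqrt 2) / 4 ≤ c :=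
  bb84_cloning_error_lower_bound_general c ω₀ ωp hω₀ hωp h0 hplus hcontr
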